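/- Let K be a d×d complex matrix such that K D Kᴴ is diagonal for every diagonal density matrix D on ℂ^d. Then every column of K contains at most one nonzero entry: for each column index j there is at most one row index i with K_{ij} ≠ 0. -/

import Mathlib

open Matrix BigOperators
open scoped ComplexOrder

noncomputable section

/-- A density matrix on ℂ^d: positive semidefinite with trace 1. -/
def IsDensityMatrix {d : ℕ} (ρ : Matrix (Fin d) (Fin d) ℂ) : Prop :=
  ρ.PosSemidef ∧ ρ.trace = 1

/-- An incoherent Kraus family: completeness relation plus each Kraus operator
maps diagonal density matrices to diagonal matrices. -/
def IsIncoherentKraus {d : ℕ} {ι : Type} [Fintype ι]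
    (K : ι → Matrix (Fin d) (Fin d) ℂ) : Prop :=
  (∑ n, (K n)ᴴ * K n = 1) ∧
  ∀ D : Matrix (Fin d) (Fin d) ℂ, IsDensityMatrix D → D.IsDiag →
    ∀ n, ((K n) * D * (K n)ᴴ).IsDiag

/-- A unitary incoherent matrix: unitary and U D Uᴴ diagonal for every diagonal
density matrix D. -/
def IsUnitaryIncoherent {d : ℕ} (U : Matrix (Fin d) (Fin d) ℂ) : Prop :=
  U * Uᴴ = 1 ∧ Uᴴ * U = 1 ∧
  ∀ D : Matrix (Fin d) (Fin d) ℂ, IsDensityMatrix D → D.IsDiag → (U * D * Uᴴ).IsDiag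

/-- S_MCS: rank-one projections onto unit vectors whose coordinates all have
modulus 1/√d. -/
def InSMCS {d : ℕ} (ρ : Matrix (Fin d) (Fin d) ℂ) : Prop :=
  ∃ ψ : Fin d → ℂ, (∑ j, ‖ψ j‖ ^ 2 = 1) ∧
    (∀ j, ‖ψ j‖ = 1 / Real.sqrt d) ∧
    ρ = Matrix.vecMulVec ψ (star ψ)

/-- A valid coherence measure: (C1) nonnegativity and vanishing exactly on diagonal
(incoherent) states; (C2) monotonicity under incoherent operations; (C3) monotonicity
on average under subselection; (C4) convexity. -/
def IsValidCoherenceMeasure {d : ℕ} (C : Matrix (Fin d) (Fin d) ℂ → ℝ) : Prop :=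
  (∀ ρ, IsDensityMatrix ρ → 0 ≤ C ρ) ∧
  (∀ ρ, IsDensityMatrix ρ → (C ρ = 0 ↔ ρ.IsDiag)) ∧
  (∀ ρ, IsDensityMatrix ρ → ∀ (N : ℕ) (K : Fin N → Matrix (Fin d) (Fin d) ℂ),
    IsIncoherentKraus K → C (∑ n, K n * ρ * (K n)ᴴ) ≤ C ρ) ∧
  (∀ ρ, IsDensityMatrix ρ → ∀ (N : ℕ) (K : Fin N → Matrix (Fin d) (Fin d) ℂ),
    IsIncoherentKraus K →
    ∑ n ∈ Finset.univ.filter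
        (fun n => 0 < (Matrix.trace (K n * ρ * (K n)ᴴ)).re),
      (Matrix.trace (K n * ρ * (K n)ᴴ)).re *
        C ((((Matrix.trace (K n * ρ * (K n)ᴴ)).re : ℂ))⁻¹ • (K n * ρ * (K n)ᴴ)) ≤ C ρ) ∧
  (∀ (M : ℕ) (q : Fin M → ℝ) (ρs : Fin M → Matrix (Fin d) (Fin d) ℂ),
    (∀ k, 0 ≤ q k) → (∑ k, q k = 1) → (∀ k, IsDensityMatrix (ρs k)) →
    C (∑ k, (q k : ℂ) • ρs k) ≤ ∑ k, q k * C (ρs k))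

/-! Apply the hypothesis to the pure incoherent state `|j⟩⟨j|`: the image `K |j⟩⟨j| Kᴴ` is the
rank-one matrix with `(i, i')` entry `K i j * conj (K i' j)`, so being diagonal forces at most one
of the `K i j` to be nonzero. -/

theorem isDensityMatrix_diagonal_iff {d : ℕ} {p : Fin d → ℂ} :
    IsDensityMatrix (diagonal p) ↔ 0 ≤ p ∧ ∑ i, p i = 1 := by
  simp only [IsDensityMatrix, posSemidef_diagonal_iff, trace_diagonal, Pi.le_def, Pi.zero_apply]

theorem isDensityMatrix_diagonal_single {d : ℕ} (j : Fin d) :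
    IsDensityMatrix (diagonal (Pi.single j 1)) :=
  isDensityMatrix_diagonal_iff.mpr ⟨Pi.single_nonneg.mpr zero_le_one, by simp⟩

theorem mul_diagonal_single_mul_conjTranspose_apply {m n α : Type*} [Fintype n]
    [DecidableEq n] [Semiring α] [StarRing α] (K : Matrix m n α) (j : n) (i i' : m) :
    (K * diagonal (Pi.single j (1 : α)) * Kᴴ) i i' = K i j * star (K i' j) := by
  rw [mul_apply]
  simp [mul_diagonal, Pi.single_apply]

/-- an incoherent Kraus operator has at most one nonzero entry in
every column. -/
theorem incoherent_kraus_column_at_most_one_nonzero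
    {d : ℕ} (K : Matrix (Fin d) (Fin d) ℂ)
    (hK : ∀ D : Matrix (Fin d) (Fin d) ℂ, IsDensityMatrix D → D.IsDiag →
      (K * D * Kᴴ).IsDiag) :
    ∀ j i i', K i j ≠ 0 → K i' j ≠ 0 → i = i' := by
  intro j i i' hi hi'
  by_contra hne
  have hoff : (K * diagonal (Pi.single j (1 : ℂ)) * Kᴴ) i i' = 0 :=
    hK _ (isDensityMatrix_diagonal_single j) (isDiag_diagonal _) hne
  rw [mul_diagonal_single_mul_conjTranspose_apply] at hoff
  exact mul_ne_zero hi (star_ne_zero.mpr hi') hoff
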